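/- arXiv:2205.01801 — 6 statements merged into one kernel-verified Lean document; each statement's English description precedes it below -/
import Mathlib

section
/- Let S be maximally monotone on a real Hilbert space X with resolvents J_{μ}^S, let T be maximally monotone with Yosida approximates T_λ, and consider the iteration x_{n+1} = J_{μ_n}^S(x_n + μ_n T_{λ_n} x_n) with μ_n, λ_n > 0. Then for all n, i ∈ ℕ: ‖x_n − J_{μ_i}^S(x_n + μ_i T_{λ_n} x_n)‖ ≤ ‖x_n − x_{n+1}‖ + |μ_n − μ_i| · ‖x_n − x_{n+1}‖ / μ_n. -/
/-- For Moudafi's iteration `x_{n+1} = J^S_{μ_n}(x_n + μ_n T_{λ_n} x_n)`,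
for all `n, i`:
`‖x_n − J^S_{μ_i}(x_n + μ_i T_{λ_n} x_n)‖ ≤ ‖x_n − x_{n+1}‖ + |μ_n − μ_i|·‖x_n − x_{n+1}‖/μ_n`. -/
theorem stmt4 {X : Type*} [NormedAddCommGroup X] [InnerProductSpace ℝ X]
    (S T : X → Set X) (JS JT : ℝ → X → X) (Tl : ℝ → X → X)
    (μ lam : ℕ → ℝ) (hμ : ∀ n, 0 < μ n) (hlam : ∀ n, 0 < lam n)
    (hJS_ne : ∀ m : ℝ, 0 < m → ∀ u v : X, ‖JS m u - JS m v‖ ≤ ‖u - v‖)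
    (hJS_id : ∀ γ : ℝ, 0 < γ → ∀ c : ℝ, 0 < c → ∀ u : X,
      JS γ u = JS (c * γ) (c • u + (1 - c) • JS γ u))
    (hTl : ∀ l : ℝ, 0 < l → ∀ u : X, Tl l u = l⁻¹ • (u - JT l u))
    (x : ℕ → X)
    (hrec : ∀ n, x (n + 1) = JS (μ n) (x n + μ n • Tl (lam n) (x n)))
    (n i : ℕ) :
    ‖x n - JS (μ i) (x n + μ i • Tl (lam n) (x n))‖ ≤
      ‖x n - x (n + 1)‖ + |μ n - μ i| * (‖x n - x (n + 1)‖ / μ n) := by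
  set c : ℝ := μ i / μ n with hc
  have hμn := hμ n
  have hμi := hμ i
  have hcpos : 0 < c := div_pos hμi hμn
  have hcμ : c * μ n = μ i := div_mul_cancel₀ _ (ne_of_gt hμn)
  set u : X := x n + μ n • Tl (lam n) (x n) with hu
  set v : X := x n + μ i • Tl (lam n) (x n) with hv
  have hx1 : x (n + 1) = JS (μ i) (c • u + (1 - c) • x (n + 1)) := by
    have := hJS_id (μ n) hμn c hcpos u
    rw [hcμ] at this
    rw [hrec n, ← hu] at *
    rw [← this]
  have htri : ‖x n - JS (μ i) v‖ ≤ ‖x n - x (n + 1)‖ + ‖x (n + 1) - JS (μ i) v‖ :=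
    norm_sub_le_norm_sub_add_norm_sub _ _ _
  have hne : ‖x (n + 1) - JS (μ i) v‖ ≤ ‖(c • u + (1 - c) • x (n + 1)) - v‖ := by
    nth_rewrite 1 [hx1]
    exact hJS_ne (μ i) hμi _ _
  have hvec : (c • u + (1 - c) • x (n + 1)) - v = (1 - c) • (x (n + 1) - x n) := by
    rw [hu, hv]
    have : c • (μ n • Tl (lam n) (x n)) = μ i • Tl (lam n) (x n) := by
      rw [smul_smul, hcμ]
    rw [smul_add, this]
    module
  have hnorm : ‖(c • u + (1 - c) • x (n + 1)) - v‖ =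
      |μ n - μ i| * (‖x n - x (n + 1)‖ / μ n) := by
    rw [hvec, norm_smul, Real.norm_eq_abs, ← norm_neg (x (n+1) - x n), neg_sub]
    have h1 : |1 - c| = |μ n - μ i| / μ n := by
      rw [hc, show (1 : ℝ) - μ i / μ n = (μ n - μ i) / μ n from by field_simp,
        abs_div, abs_of_pos hμn]
    rw [h1]
    ring
  calc ‖x n - JS (μ i) v‖ ≤ ‖x n - x (n + 1)‖ + ‖x (n + 1) - JS (μ i) v‖ := htri
    _ ≤ ‖x n - x (n + 1)‖ + |μ n - μ i| * (‖x n - x (n + 1)‖ / μ n) := by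
        rw [← hnorm]; exact add_le_add_right hne _
end

section
/- Let T, S be maximally monotone operators on a real Hilbert space X with iteration x_{n+1} = J_{μ_n}^S(x_n + μ_n T_{λ_n} x_n). Let n, r ∈ ℕ, l ∈ ℕ*, and suppose x*, y* satisfy ‖x* − J_{μ_{n+k}}^S(x* + μ_{n+k} y*)‖ ≤ 1/(r+1) for all k ∈ [0; l−1]. Then ‖x_{n+l} − x*‖ ≤ ∏_{k=0}^{l−1}(1 + μ_{n+k}/λ_{n+k}) ‖x_n − x*‖ + (‖T°x*‖ + ‖y*‖) ∑_{k=0}^{l−1} μ_{n+k} ∏_{j=k+1}^{l−1}(1 + μ_{n+j}/λ_{n+j}) + ∑_{k=1}^{l} (1/(r+1)) ∏_{j=k}^{l−1}(1 + μ_{n+j}/λ_{n+j}). -/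
/-- quasi-Fejér inequality for Moudafi's algorithm: if
`‖x* − J^S_{μ_{n+k}}(x* + μ_{n+k} y*)‖ ≤ 1/(r+1)` for all `k ∈ [0; l−1]`, then
`‖x_{n+l} − x*‖ ≤ ∏_{k<l}(1 + μ_{n+k}/λ_{n+k})‖x_n − x*‖
  + (‖T°x*‖+‖y*‖) ∑_{k<l} μ_{n+k} ∏_{j=k+1}^{l−1}(1+μ_{n+j}/λ_{n+j})
  + ∑_{k=1}^{l} (1/(r+1)) ∏_{j=k}^{l−1}(1+μ_{n+j}/λ_{n+j})`. -/
theorem stmt5 {X : Type*} [NormedAddCommGroup X] [InnerProductSpace ℝ X]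
    (T S : X → Set X) (Tc : X → X) (JS : ℝ → X → X) (Tl : ℝ → X → X)
    (μ lam : ℕ → ℝ) (hμ : ∀ n, 0 < μ n) (hlam : ∀ n, 0 < lam n)
    (hJS_ne : ∀ m : ℝ, 0 < m → ∀ u v : X, ‖JS m u - JS m v‖ ≤ ‖u - v‖)
    (hTl_lip : ∀ l : ℝ, 0 < l → ∀ u v : X, ‖Tl l u - Tl l v‖ ≤ l⁻¹ * ‖u - v‖)
    (x : ℕ → X)
    (hrec : ∀ n, x (n + 1) = JS (μ n) (x n + μ n • Tl (lam n) (x n)))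
    (xs ys : X) (hdomT : xs ∈ {u : X | (T u).Nonempty})
    (hTl_bound : ∀ l : ℝ, 0 < l → ‖Tl l xs‖ ≤ ‖Tc xs‖)
    (n r : ℕ) (l : ℕ) (hl : 1 ≤ l)
    (happrox : ∀ k < l, ‖xs - JS (μ (n + k)) (xs + μ (n + k) • ys)‖ ≤ 1 / ((r : ℝ) + 1)) :
    ‖x (n + l) - xs‖ ≤
      (∏ k ∈ Finset.range l, (1 + μ (n + k) / lam (n + k))) * ‖x n - xs‖
      + (‖Tc xs‖ + ‖ys‖) *
          ∑ k ∈ Finset.range l,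
            μ (n + k) * ∏ j ∈ Finset.Ico (k + 1) l, (1 + μ (n + j) / lam (n + j))
      + ∑ k ∈ Finset.Icc 1 l,
          (1 / ((r : ℝ) + 1)) * ∏ j ∈ Finset.Ico k l, (1 + μ (n + j) / lam (n + j)) := by
  clear hl
  have step : ∀ m, ‖x (m+1) - xs‖ ≤ (1 + μ m / lam m) * ‖x m - xs‖
      + μ m * (‖Tc xs‖ + ‖ys‖) + ‖xs - JS (μ m) (xs + μ m • ys)‖ := by
    intro m
    rw [hrec m]
    have h1 : ‖JS (μ m) (x m + μ m • Tl (lam m) (x m)) - xs‖ ≤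
        ‖JS (μ m) (x m + μ m • Tl (lam m) (x m)) - JS (μ m) (xs + μ m • ys)‖
        + ‖xs - JS (μ m) (xs + μ m • ys)‖ := by
      rw [norm_sub_rev (xs)]
      exact norm_sub_le_norm_sub_add_norm_sub _ _ _
    have h2 : ‖JS (μ m) (x m + μ m • Tl (lam m) (x m)) - JS (μ m) (xs + μ m • ys)‖ ≤
        ‖(x m + μ m • Tl (lam m) (x m)) - (xs + μ m • ys)‖ :=
      hJS_ne (μ m) (hμ m) _ _
    have huv : (x m + μ m • Tl (lam m) (x m)) - (xs + μ m • ys)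
        = (x m - xs) + μ m • (Tl (lam m) (x m) - ys) := by
      rw [smul_sub]; abel
    have h3 : ‖(x m - xs) + μ m • (Tl (lam m) (x m) - ys)‖ ≤
        ‖x m - xs‖ + μ m * ‖Tl (lam m) (x m) - ys‖ := by
      refine (norm_add_le _ _).trans ?_
      rw [norm_smul, Real.norm_of_nonneg (hμ m).le]
    have h4 : ‖Tl (lam m) (x m) - ys‖ ≤
        ‖Tl (lam m) (x m) - Tl (lam m) xs‖ + ‖Tl (lam m) xs‖ + ‖ys‖ := by
      calc ‖Tl (lam m) (x m) - ys‖
          = ‖(Tl (lam m) (x m) - Tl (lam m) xs) + Tl (lam m) xs + (-ys)‖ := by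
            congr 1; abel
        _ ≤ ‖(Tl (lam m) (x m) - Tl (lam m) xs) + Tl (lam m) xs‖ + ‖-ys‖ := norm_add_le _ _
        _ ≤ ‖Tl (lam m) (x m) - Tl (lam m) xs‖ + ‖Tl (lam m) xs‖ + ‖ys‖ := by
            rw [norm_neg]
            exact add_le_add_left (norm_add_le _ _) _
    have h5 := hTl_lip (lam m) (hlam m) (x m) xs
    have h6 := hTl_bound (lam m) (hlam m)
    have hdiv : μ m / lam m = μ m * (lam m)⁻¹ := div_eq_mul_inv _ _
    have hμm := (hμ m).le
    have h7 : ‖Tl (lam m) (x m) - ys‖ ≤ (lam m)⁻¹ * ‖x m - xs‖ + ‖Tc xs‖ + ‖ys‖ := by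
      linarith
    rw [huv] at h2
    have hexp : (1 + μ m / lam m) * ‖x m - xs‖
        = ‖x m - xs‖ + μ m * ((lam m)⁻¹ * ‖x m - xs‖) := by rw [hdiv]; ring
    have h8 := mul_le_mul_of_nonneg_left h7 hμm
    rw [mul_add, mul_add] at h8
    linarith
  revert happrox
  induction l with
  | zero => intro _; simp
  | succ L ih =>
    intro happrox
    have ihb := ih (fun k hk => happrox k (hk.trans (Nat.lt_succ_self L)))
    set c := μ (n + L) / lam (n + L) with hc_def
    have hc : 0 ≤ c := div_nonneg (hμ _).le (hlam _).le
    set B := ‖Tc xs‖ + ‖ys‖ with hB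
    have hB0 : 0 ≤ B := by
      have := (norm_nonneg (Tl (lam (n+L)) xs)).trans (hTl_bound _ (hlam (n+L)))
      have := norm_nonneg ys
      positivity
    have hE : ‖xs - JS (μ (n + L)) (xs + μ (n + L) • ys)‖ ≤ 1 / ((r : ℝ) + 1) :=
      happrox L (Nat.lt_succ_self L)
    have hstep := step (n + L)
    have hx : n + (L + 1) = (n + L) + 1 := rfl
    rw [hx]
    have hP : (∏ k ∈ Finset.range (L+1), (1 + μ (n + k) / lam (n + k)))
        = (∏ k ∈ Finset.range L, (1 + μ (n + k) / lam (n + k))) * (1 + c) :=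
      Finset.prod_range_succ _ _
    have hS1 : (∑ k ∈ Finset.range (L+1),
          μ (n + k) * ∏ j ∈ Finset.Ico (k + 1) (L+1), (1 + μ (n + j) / lam (n + j)))
        = (∑ k ∈ Finset.range L,
          μ (n + k) * ∏ j ∈ Finset.Ico (k + 1) L, (1 + μ (n + j) / lam (n + j))) * (1 + c)
          + μ (n + L) := by
      rw [Finset.sum_range_succ, Finset.Ico_self, Finset.prod_empty, mul_one,
        Finset.sum_congr rfl (fun k hk => ?_), ← Finset.sum_mul]
      rw [Finset.prod_Ico_succ_top (Nat.succ_le_of_lt (Finset.mem_range.mp hk))]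
      ring
    have hS2 : (∑ k ∈ Finset.Icc 1 (L+1),
          (1 / ((r : ℝ) + 1)) * ∏ j ∈ Finset.Ico k (L+1), (1 + μ (n + j) / lam (n + j)))
        = (∑ k ∈ Finset.Icc 1 L,
          (1 / ((r : ℝ) + 1)) * ∏ j ∈ Finset.Ico k L, (1 + μ (n + j) / lam (n + j))) * (1 + c)
          + 1 / ((r : ℝ) + 1) := by
      rw [Finset.sum_Icc_succ_top (Nat.le_add_left 1 L), Finset.Ico_self, Finset.prod_empty,
        mul_one, Finset.sum_congr rfl (fun k hk => ?_), ← Finset.sum_mul]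
      rw [Finset.prod_Ico_succ_top (Finset.mem_Icc.mp hk).2]
      ring
    rw [hP, hS1, hS2]
    have hmono := mul_le_mul_of_nonneg_left ihb (by linarith : (0:ℝ) ≤ 1 + c)
    nlinarith [hstep, hmono]
end

section
/- Under the setting of the quasi-Fejér inequality for Moudafi's algorithm, if M ≥ ‖T°x*‖ for all x* ∈ X₀, A ≥ ∑_{n=0}^∞ μ_n/λ_n, and λ_n ≤ B for all n, then ∑_{n=0}^∞ μ_n < ∞ and for all r, n, m ∈ ℕ, setting k := max{n + m − 1, ⌈(r+1)·m·e^A⌉}, every x* ∈ Γ_k and every l ≤ m satisfy ‖x_{n+l} − x*‖ < e^A ‖x_n − x*‖ + (2M+1) e^A ∑_{i=n}^{n+l−1} μ_i + 1/(r+1). -/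
lemma prod_Ico_shift (f : ℕ → ℝ) (n a b : ℕ) :
    ∏ j ∈ Finset.Ico a b, f (n + j) = ∏ i ∈ Finset.Ico (n + a) (n + b), f i := by
  rw [Finset.prod_Ico_eq_prod_range, Finset.prod_Ico_eq_prod_range]
  have : n + b - (n + a) = b - a := by omega
  rw [this]
  exact Finset.prod_congr rfl fun i _ => by rw [add_assoc]

lemma sum_range_shift (f : ℕ → ℝ) (n l : ℕ) :
    ∑ k ∈ Finset.range l, f (n + k) = ∑ i ∈ Finset.Ico n (n + l), f i := by
  rw [Finset.sum_Ico_eq_sum_range]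
  simp

/-- The approximation sets `Γ_k` for Moudafi's algorithm. -/
def Gamma {X : Type*} [NormedAddCommGroup X] [NormedSpace ℝ X]
    (X0 : Set X) (T : X → Set X) (Tc : X → X) (JS : ℝ → X → X) (μ : ℕ → ℝ) (k : ℕ) :
    Set X :=
  {xs ∈ X0 | ∃ ys : X,
    |‖ys‖ - ‖Tc xs‖| ≤ 1 / ((k : ℝ) + 1) ∧
    (∃ w ∈ T xs, ‖ys - w‖ ≤ 1 / ((k : ℝ) + 1)) ∧
    ∀ i ≤ k, ‖xs - JS (μ i) (xs + μ i • ys)‖ ≤ 1 / ((k : ℝ) + 1)}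

/-- if `M ≥ ‖T°x*‖` on `X₀`, `A ≥ ∑ μ_n/λ_n` and `λ_n ≤ B`, then `∑ μ_n < ∞`
and `(x_n)` is uniformly quasi-`(e^A·id, id)`-Fejér monotone w.r.t. `Γ_k` with modulus
`χ(r,n,m) = max{n+m∸1, ⌈(r+1)·m·e^A⌉}`. -/
theorem stmt6 {X : Type*} [NormedAddCommGroup X] [NormedSpace ℝ X]
    (T S : X → Set X) (Tc : X → X) (JS : ℝ → X → X) (Tl : ℝ → X → X)
    (μ lam : ℕ → ℝ) (hμ : ∀ n, 0 < μ n) (hlam : ∀ n, 0 < lam n)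
    (x : ℕ → X)
    (hrec : ∀ n, x (n + 1) = JS (μ n) (x n + μ n • Tl (lam n) (x n)))
    (X0 : Set X) (M A B : ℝ)
    (hM : ∀ xs ∈ X0, ‖Tc xs‖ ≤ M)
    (hsum : Summable (fun n => μ n / lam n)) (hA : ∑' n, μ n / lam n ≤ A)
    (hB : ∀ n, lam n ≤ B)
    (hqf : ∀ (n l : ℕ) (ε : ℝ) (xs ys : X), 0 ≤ ε →
      (∀ k < l, ‖xs - JS (μ (n + k)) (xs + μ (n + k) • ys)‖ ≤ ε) →
      ‖x (n + l) - xs‖ ≤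
        (∏ k ∈ Finset.range l, (1 + μ (n + k) / lam (n + k))) * ‖x n - xs‖
        + (‖Tc xs‖ + ‖ys‖) *
            ∑ k ∈ Finset.range l,
              μ (n + k) * ∏ j ∈ Finset.Ico (k + 1) l, (1 + μ (n + j) / lam (n + j))
        + ∑ k ∈ Finset.Icc 1 l, ε * ∏ j ∈ Finset.Ico k l, (1 + μ (n + j) / lam (n + j)))
    (hprod : ∀ n l : ℕ, ∏ k ∈ Finset.Ico n l, (1 + μ k / lam k) ≤ Real.exp A) :
    Summable μ ∧
    ∀ r n m : ℕ,
      ∀ xs ∈ Gamma X0 T Tc JS μ (max (n + m - 1) ⌈((r : ℝ) + 1) * m * Real.exp A⌉₊),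
        ∀ l ≤ m,
          ‖x (n + l) - xs‖ <
            Real.exp A * ‖x n - xs‖
            + (2 * M + 1) * Real.exp A * ∑ i ∈ Finset.Ico n (n + l), μ i
            + 1 / ((r : ℝ) + 1) := by
  have hA0 : 0 ≤ A := le_trans (tsum_nonneg fun n => le_of_lt (div_pos (hμ n) (hlam n))) hA
  have hexp1 : (1 : ℝ) ≤ Real.exp A := Real.one_le_exp hA0
  have hexp0 : (0 : ℝ) < Real.exp A := Real.exp_pos A
  constructor
  · apply Summable.of_nonneg_of_le (fun n => le_of_lt (hμ n))
      (fun n => ?_) (hsum.mul_left B)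
    have h1 : μ n / lam n * lam n = μ n := div_mul_cancel₀ _ (ne_of_gt (hlam n))
    have h2 : μ n / lam n * lam n ≤ μ n / lam n * B :=
      mul_le_mul_of_nonneg_left (hB n) (le_of_lt (div_pos (hμ n) (hlam n)))
    rw [h1] at h2
    linarith [h2]
  · intro r n m xs hxs l hl
    set k := max (n + m - 1) ⌈((r : ℝ) + 1) * m * Real.exp A⌉₊ with hk
    obtain ⟨hx0, ys, hy1, hy2, hy3⟩ := hxs
    have hkpos : (0 : ℝ) < (k : ℝ) + 1 := by positivity
    have hr1 : (0 : ℝ) < (r : ℝ) + 1 := by positivity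
    have hM0 : 0 ≤ M := le_trans (norm_nonneg _) (hM xs hx0)
    rcases Nat.eq_zero_or_pos l with hl0 | hl1
    · subst hl0
      simp only [add_zero, Finset.Ico_self, Finset.sum_empty, mul_zero]
      have := norm_nonneg (x n - xs)
      nlinarith [one_div_pos.mpr hr1]
    · have hm1 : 1 ≤ m := le_trans hl1 hl
      -- apply hqf
      have hcond : ∀ j < l, ‖xs - JS (μ (n + j)) (xs + μ (n + j) • ys)‖ ≤ 1 / ((k : ℝ) + 1) := by
        intro j hj
        apply hy3
        have : n + j ≤ n + m - 1 := by omega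
        exact le_trans this (le_max_left _ _)
      have hmain := hqf n l (1 / ((k : ℝ) + 1)) xs ys (le_of_lt (one_div_pos.mpr hkpos)) hcond
      -- factor bounds
      have hfac : ∀ i : ℕ, (1 : ℝ) ≤ 1 + μ i / lam i := fun i => by
        have := div_pos (hμ i) (hlam i); linarith
      -- term 1
      have hP : (∏ j ∈ Finset.range l, (1 + μ (n + j) / lam (n + j))) ≤ Real.exp A := by
        rw [Finset.range_eq_Ico, prod_Ico_shift (fun i => 1 + μ i / lam i) n 0 l]
        simpa using hprod n (n + l)
      have hT1 : (∏ j ∈ Finset.range l, (1 + μ (n + j) / lam (n + j))) * ‖x n - xs‖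
          ≤ Real.exp A * ‖x n - xs‖ :=
        mul_le_mul_of_nonneg_right hP (norm_nonneg _)
      -- coefficient bound
      have hk1 : (1 : ℝ) / ((k : ℝ) + 1) ≤ 1 := by
        rw [div_le_one hkpos]; have : (0:ℝ) ≤ (k:ℝ) := Nat.cast_nonneg k; linarith
      have hys : ‖ys‖ ≤ M + 1 := by
        have := (abs_le.mp hy1).2
        have h2 := hM xs hx0
        linarith
      have hcoef : ‖Tc xs‖ + ‖ys‖ ≤ 2 * M + 1 := by
        have := hM xs hx0; linarith
      -- term 2
      have hQ : ∀ j ∈ Finset.range l,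
          μ (n + j) * ∏ i ∈ Finset.Ico (j + 1) l, (1 + μ (n + i) / lam (n + i))
          ≤ μ (n + j) * Real.exp A := by
        intro j _
        apply mul_le_mul_of_nonneg_left _ (le_of_lt (hμ (n + j)))
        rw [prod_Ico_shift (fun i => 1 + μ i / lam i) n (j + 1) l]
        exact hprod (n + (j + 1)) (n + l)
      have hS2nn : 0 ≤ ∑ j ∈ Finset.range l,
          μ (n + j) * ∏ i ∈ Finset.Ico (j + 1) l, (1 + μ (n + i) / lam (n + i)) := by
        apply Finset.sum_nonneg
        intro j _
        apply mul_nonneg (le_of_lt (hμ (n + j)))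
        apply Finset.prod_nonneg
        intro i _
        linarith [hfac (n + i)]
      have hT2 : (‖Tc xs‖ + ‖ys‖) *
          ∑ j ∈ Finset.range l,
            μ (n + j) * ∏ i ∈ Finset.Ico (j + 1) l, (1 + μ (n + i) / lam (n + i))
          ≤ (2 * M + 1) * Real.exp A * ∑ i ∈ Finset.Ico n (n + l), μ i := by
        have h1 : (‖Tc xs‖ + ‖ys‖) * _ ≤ (2 * M + 1) *
            (∑ j ∈ Finset.range l,
              μ (n + j) * ∏ i ∈ Finset.Ico (j + 1) l, (1 + μ (n + i) / lam (n + i))) :=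
          mul_le_mul_of_nonneg_right hcoef hS2nn
        refine le_trans h1 ?_
        rw [mul_assoc]
        apply mul_le_mul_of_nonneg_left _ (by linarith : (0:ℝ) ≤ 2 * M + 1)
        calc ∑ j ∈ Finset.range l,
              μ (n + j) * ∏ i ∈ Finset.Ico (j + 1) l, (1 + μ (n + i) / lam (n + i))
            ≤ ∑ j ∈ Finset.range l, μ (n + j) * Real.exp A := Finset.sum_le_sum hQ
          _ = Real.exp A * ∑ j ∈ Finset.range l, μ (n + j) := by
              rw [← Finset.sum_mul, mul_comm]
          _ = Real.exp A * ∑ i ∈ Finset.Ico n (n + l), μ i := by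
              rw [sum_range_shift]
      -- term 3
      have hT3 : ∑ j ∈ Finset.Icc 1 l,
          (1 / ((k : ℝ) + 1)) * ∏ i ∈ Finset.Ico j l, (1 + μ (n + i) / lam (n + i))
          < 1 / ((r : ℝ) + 1) := by
        have hbound : ∀ j ∈ Finset.Icc 1 l,
            (1 / ((k : ℝ) + 1)) * ∏ i ∈ Finset.Ico j l, (1 + μ (n + i) / lam (n + i))
            ≤ (1 / ((k : ℝ) + 1)) * Real.exp A := by
          intro j _
          apply mul_le_mul_of_nonneg_left _ (le_of_lt (one_div_pos.mpr hkpos))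
          rw [prod_Ico_shift (fun i => 1 + μ i / lam i) n j l]
          exact hprod (n + j) (n + l)
        have hsum3 : ∑ j ∈ Finset.Icc 1 l,
            (1 / ((k : ℝ) + 1)) * ∏ i ∈ Finset.Ico j l, (1 + μ (n + i) / lam (n + i))
            ≤ (l : ℝ) * ((1 / ((k : ℝ) + 1)) * Real.exp A) := by
          calc _ ≤ ∑ _j ∈ Finset.Icc 1 l, (1 / ((k : ℝ) + 1)) * Real.exp A :=
                Finset.sum_le_sum hbound
            _ = (l : ℝ) * ((1 / ((k : ℝ) + 1)) * Real.exp A) := by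
                rw [Finset.sum_const, Nat.card_Icc]
                simp [nsmul_eq_mul]
        refine lt_of_le_of_lt hsum3 ?_
        -- l * (e^A/(k+1)) < 1/(r+1)
        have hkk : ((r : ℝ) + 1) * m * Real.exp A ≤ (k : ℝ) := by
          have h1 : ((r : ℝ) + 1) * m * Real.exp A ≤ (⌈((r : ℝ) + 1) * m * Real.exp A⌉₊ : ℝ) :=
            Nat.le_ceil _
          have h2 : (⌈((r : ℝ) + 1) * m * Real.exp A⌉₊ : ℕ) ≤ k := le_max_right _ _
          exact le_trans h1 (Nat.cast_le.mpr h2)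
        have hlm : (l : ℝ) ≤ (m : ℝ) := Nat.cast_le.mpr hl
        have hm0 : (0 : ℝ) < (m : ℝ) := by exact_mod_cast hm1
        have key : (l : ℝ) * Real.exp A * ((r : ℝ) + 1) < (k : ℝ) + 1 := by
          nlinarith [hexp0, hr1, hkk, hlm]
        calc (l : ℝ) * (1 / ((k : ℝ) + 1) * Real.exp A)
            = (l * Real.exp A) / ((k : ℝ) + 1) := by ring
          _ < 1 / ((r : ℝ) + 1) := by
              rw [div_lt_div_iff₀ hkpos hr1]; nlinarith [key]
      calc ‖x (n + l) - xs‖ ≤ _ := hmain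
        _ < Real.exp A * ‖x n - xs‖
            + (2 * M + 1) * Real.exp A * ∑ i ∈ Finset.Ico n (n + l), μ i
            + 1 / ((r : ℝ) + 1) := by
          have := add_lt_add_of_le_of_lt (add_le_add hT1 hT2) hT3
          linarith [this]
end

section
/- Let ϖ be a modulus of uniform continuity for T w.r.t. H* (monotone increasing) and M ∈ ℕ* with M ≥ ‖T°x*‖ for all x* ∈ X₀. Then the set ⋂_k Γ_k is uniformly closed w.r.t. (Γ_k) with moduli δ(k) = 2k+1 and ω(k) = max{4k+3, ϖ(4M(k+1)² − 1)}: for all k and p, q ∈ X₀, if q ∈ Γ_{δ(k)} and ‖p − q‖ ≤ 1/(ω(k)+1), then p ∈ Γ_k. -/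
/-- uniform closedness: `⋂_k Γ_k` is uniformly closed w.r.t. `(Γ_k)` with
moduli `δ(k) = 2k+1` and `ω(k) = max{4k+3, ϖ(4M(k+1)² − 1)}`: if `q ∈ Γ_{δ(k)}` and
`‖p − q‖ ≤ 1/(ω(k)+1)` then `p ∈ Γ_k`. -/
theorem stmt7 {X : Type*} [NormedAddCommGroup X] [NormedSpace ℝ X]
    (T S : X → Set X) (Tc : X → X) (JS : ℝ → X → X)
    (μ : ℕ → ℝ) (hμ : ∀ n, 0 < μ n)
    (X0 : Set X)
    (ϖ : ℕ → ℕ) (hϖmono : Monotone ϖ)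
    (hϖ : ∀ k : ℕ, ∀ u v : X, ‖u - v‖ ≤ 1 / ((ϖ k : ℝ) + 1) →
      ∀ p ∈ T u, ∃ q ∈ T v, ‖p - q‖ ≤ 1 / ((k : ℝ) + 1))
    (M : ℕ) (hM1 : 1 ≤ M) (hM : ∀ xs ∈ X0, ‖Tc xs‖ ≤ (M : ℝ))
    (hJS_ne : ∀ m : ℝ, 0 < m → ∀ u v : X, ‖JS m u - JS m v‖ ≤ ‖u - v‖)
    (hTc' : ∀ k : ℕ, ∀ u v : X, u ∈ X0 → v ∈ X0 →
      ‖u - v‖ ≤ 1 / ((ϖ (M * k ^ 2 + 2 * M * k + M - 1) : ℝ) + 1) →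
      ‖Tc u - Tc v‖ ≤ 1 / ((k : ℝ) + 1))
    (k : ℕ) (p q : X) (hp : p ∈ X0)
    (hq : q ∈ Gamma X0 T Tc JS μ (2 * k + 1))
    (hpq : ‖p - q‖ ≤ 1 / ((max (4 * k + 3) (ϖ (4 * M * (k + 1) ^ 2 - 1)) : ℝ) + 1)) :
    p ∈ Gamma X0 T Tc JS μ k := by
  obtain ⟨hqX0, ys, hys1, ⟨w, hwT, hwys⟩, hys3⟩ := hq
  -- basic positivity facts
  have hNpos : 0 < 4 * M * (k + 1) ^ 2 := by
    have : 0 < M := hM1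
    positivity
  have hNs : (4 * M * (k + 1) ^ 2 - 1 : ℕ) + 1 = 4 * M * (k + 1) ^ 2 := by omega
  have hNcast : ((4 * M * (k + 1) ^ 2 - 1 : ℕ) : ℝ) + 1 = (4 * M * (k + 1) ^ 2 : ℕ) := by
    exact_mod_cast congrArg (Nat.cast : ℕ → ℝ) hNs
  have hNge : (2 * (k : ℝ) + 2) ≤ ((4 * M * (k + 1) ^ 2 : ℕ) : ℝ) := by
    have h1 : 2 * (k + 1) ≤ 4 * M * (k + 1) ^ 2 := by nlinarith [hM1, k.zero_le]
    calc (2 * (k:ℝ) + 2) = ((2 * (k + 1) : ℕ) : ℝ) := by push_cast; ring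
    _ ≤ _ := by exact_mod_cast h1
  -- bounds from hpq
  have hpqϖ : ‖p - q‖ ≤ 1 / ((ϖ (4 * M * (k + 1) ^ 2 - 1) : ℝ) + 1) := by
    refine hpq.trans (one_div_le_one_div_of_le (by positivity) ?_)
    have := le_max_right (4 * (k:ℝ) + 3) ((ϖ (4 * M * (k + 1) ^ 2 - 1) : ℕ) : ℝ)
    linarith
  have hpq4 : ‖p - q‖ ≤ 1 / (4 * (k : ℝ) + 4) := by
    refine hpq.trans (one_div_le_one_div_of_le (by positivity) ?_)
    have := le_max_left (4 * (k:ℝ) + 3) ((ϖ (4 * M * (k + 1) ^ 2 - 1) : ℕ) : ℝ)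
    linarith
  -- nearby element of T p
  obtain ⟨w', hw'T, hww'⟩ := hϖ (4 * M * (k + 1) ^ 2 - 1) q p
    (by rw [norm_sub_rev]; exact hpqϖ) w hwT
  have hww'2 : ‖w - w'‖ ≤ 1 / (2 * (k : ℝ) + 2) := by
    refine hww'.trans (one_div_le_one_div_of_le (by positivity) ?_)
    rw [hNcast] at *
    linarith
  -- Tc continuity
  have hTcpq' : ‖Tc p - Tc q‖ ≤ 1 / (2 * (k : ℝ) + 2) := by
    have hidx : M * (2 * k + 1) ^ 2 + 2 * M * (2 * k + 1) + M = 4 * M * (k + 1) ^ 2 := by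
      ring
    have := hTc' (2 * k + 1) p q hp hqX0 (by rw [hidx]; exact hpqϖ)
    calc ‖Tc p - Tc q‖ ≤ 1 / (((2 * k + 1 : ℕ) : ℝ) + 1) := this
    _ = 1 / (2 * (k : ℝ) + 2) := by push_cast; ring_nf
  -- Γ_{2k+1} bounds in convenient form
  have hG : (1 : ℝ) / (((2 * k + 1 : ℕ)) + 1) = 1 / (2 * (k : ℝ) + 2) := by push_cast; ring_nf
  rw [hG] at hys1 hwys
  refine ⟨hp, ys, ?_, ⟨w', hw'T, ?_⟩, ?_⟩
  · have h1 : |‖ys‖ - ‖Tc p‖| ≤ |‖ys‖ - ‖Tc q‖| + |‖Tc q‖ - ‖Tc p‖| := abs_sub_le _ _ _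
    have h2 : |‖Tc q‖ - ‖Tc p‖| ≤ ‖Tc q - Tc p‖ := abs_norm_sub_norm_le _ _
    rw [norm_sub_rev] at hTcpq'
    have : 1 / (2 * (k : ℝ) + 2) + 1 / (2 * (k : ℝ) + 2) ≤ 1 / ((k : ℝ) + 1) := by
      rw [← add_div, div_le_div_iff₀ (by positivity) (by positivity)]
      ring_nf
      nlinarith [(Nat.cast_nonneg k : (0:ℝ) ≤ k)]
    linarith
  · have h1 : ‖ys - w'‖ ≤ ‖ys - w‖ + ‖w - w'‖ := norm_sub_le_norm_sub_add_norm_sub _ _ _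
    have : 1 / (2 * (k : ℝ) + 2) + 1 / (2 * (k : ℝ) + 2) ≤ 1 / ((k : ℝ) + 1) := by
      rw [← add_div, div_le_div_iff₀ (by positivity) (by positivity)]
      nlinarith [(Nat.cast_nonneg k : (0:ℝ) ≤ k)]
    linarith
  · intro i hi
    have h0 := hys3 i (by omega)
    rw [hG] at h0
    have hJ : ‖JS (μ i) (q + μ i • ys) - JS (μ i) (p + μ i • ys)‖ ≤ ‖q - p‖ := by
      have := hJS_ne (μ i) (hμ i) (q + μ i • ys) (p + μ i • ys)
      simpa [add_sub_add_right_eq_sub] using this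
    have htri : ‖p - JS (μ i) (p + μ i • ys)‖ ≤
        ‖p - q‖ + ‖q - JS (μ i) (q + μ i • ys)‖ +
        ‖JS (μ i) (q + μ i • ys) - JS (μ i) (p + μ i • ys)‖ := by
      have := norm_sub_le_norm_sub_add_norm_sub p (JS (μ i) (q + μ i • ys))
        (JS (μ i) (p + μ i • ys))
      have h2 := norm_sub_le_norm_sub_add_norm_sub p q (JS (μ i) (q + μ i • ys))
      linarith
    rw [norm_sub_rev q p] at hJ
    have hfin : 1 / (4 * (k : ℝ) + 4) + 1 / (2 * (k : ℝ) + 2) + 1 / (4 * (k : ℝ) + 4)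
        ≤ 1 / ((k : ℝ) + 1) := by
      have hk : (0:ℝ) < (k:ℝ) + 1 := by positivity
      have : 1 / (4 * (k : ℝ) + 4) + 1 / (2 * (k : ℝ) + 2) + 1 / (4 * (k : ℝ) + 4)
          = 1 / ((k : ℝ) + 1) := by
        field_simp
        ring
      linarith
    linarith
end

section
/- Let X be a real Hilbert space, T, S maximally monotone with dom S ⊆ dom T. If x* ∈ ⋂_k Γ_k (i.e., for every k there exists y*_k with |‖y*_k‖ − ‖T°x*‖| ≤ 1/(k+1), there exists z*_k ∈ Tx* with ‖y*_k − z*_k‖ ≤ 1/(k+1), and ‖x* − J_{μ_i}^S(x* + μ_i y*_k)‖ ≤ 1/(k+1) for all i ≤ k), then Tx* ∩ Sx* ≠ ∅; in fact T°x* ∈ Sx* ∩ Tx*. -/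
open scoped RealInnerProductSpace

/-- if `x* ∈ ⋂_k Γ_k`, then `Tx* ∩ Sx* ≠ ∅`; in fact `T°x* ∈ Sx* ∩ Tx*`.
Here `T°x*` is the minimal norm element of `Tx*` (characterized by the projection
inequality), and `J^S_μ` is the resolvent of `μS`, nonexpansive and with
`x = J^S_μ(x + μv) ↔ v ∈ Sx`. -/
theorem stmt8 {X : Type*} [NormedAddCommGroup X] [InnerProductSpace ℝ X]
    (T S : X → Set X) (Tc : X → X) (JS : ℝ → X → X)
    (μ : ℕ → ℝ) (hμ : ∀ i, 0 < μ i)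
    (xs : X)
    (hsel : Tc xs ∈ T xs)
    (hproj : ∀ y ∈ T xs, ⟪y - Tc xs, -Tc xs⟫ ≤ 0)
    (hJS_ne : ∀ m : ℝ, 0 < m → ∀ u v : X, ‖JS m u - JS m v‖ ≤ ‖u - v‖)
    (hJS_char : ∀ m : ℝ, 0 < m → ∀ u v : X, u = JS m (u + m • v) ↔ v ∈ S u)
    (hΓ : ∀ k : ℕ, ∃ y : X,
      |‖y‖ - ‖Tc xs‖| ≤ 1 / ((k : ℝ) + 1) ∧
      (∃ z ∈ T xs, ‖y - z‖ ≤ 1 / ((k : ℝ) + 1)) ∧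
      ∀ i ≤ k, ‖xs - JS (μ i) (xs + μ i • y)‖ ≤ 1 / ((k : ℝ) + 1)) :
    Tc xs ∈ S xs ∩ T xs ∧ (T xs ∩ S xs).Nonempty := by
  have hm0 : 0 < μ 0 := hμ 0
  set m : ℝ := μ 0 with hm
  set w : X := JS m (xs + m • Tc xs) with hw
  set C : ℝ := ‖Tc xs‖ + 1 with hC
  have hC0 : 0 ≤ C := by positivity
  have key : ∀ k : ℕ, ‖xs - w‖ ≤
      (1 / ((k : ℝ) + 1)) + m * ((1 / ((k : ℝ) + 1)) +
        2 * Real.sqrt ((1 / ((k : ℝ) + 1)) * C)) := by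
    intro k
    obtain ⟨y, h1, ⟨z, hz, h2⟩, h3⟩ := hΓ k
    set δ : ℝ := 1 / ((k : ℝ) + 1) with hδ
    have hk0 : (0 : ℝ) ≤ (k : ℝ) := Nat.cast_nonneg k
    have hδ0 : 0 < δ := by positivity
    have hδ1 : δ ≤ 1 := by
      rw [hδ, div_le_one (by positivity)]; linarith
    -- inner product bound
    have hinner : ‖Tc xs‖ ^ 2 ≤ ⟪z, Tc xs⟫ := by
      have h := hproj z hz
      have : ⟪z - Tc xs, -Tc xs⟫ = -⟪z, Tc xs⟫ + ‖Tc xs‖ ^ 2 := by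
        rw [inner_sub_left, inner_neg_right, inner_neg_right,
          real_inner_self_eq_norm_sq]; ring
      linarith [this ▸ h]
    have hzsq : ‖z - Tc xs‖ ^ 2 ≤ ‖z‖ ^ 2 - ‖Tc xs‖ ^ 2 := by
      have := norm_sub_sq_real z (Tc xs)
      nlinarith
    -- norm of z bound
    have hy : ‖y‖ ≤ ‖Tc xs‖ + δ := by
      have := abs_le.mp h1
      linarith [this.2]
    have hzn : ‖z‖ ≤ ‖Tc xs‖ + 2 * δ := by
      have h4 : ‖z‖ - ‖y‖ ≤ ‖y - z‖ := by
        have := norm_sub_norm_le y z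
        rw [abs_sub_comm] at *
        linarith [abs_le.mp (abs_norm_sub_norm_le y z)]
      linarith
    have hzn0 : 0 ≤ ‖z‖ := norm_nonneg z
    have hsq : ‖z - Tc xs‖ ^ 2 ≤ 4 * (δ * C) := by
      have h5 : ‖z‖ ^ 2 ≤ (‖Tc xs‖ + 2 * δ) ^ 2 := by nlinarith
      have h6 : δ ^ 2 ≤ δ := by nlinarith
      nlinarith [norm_nonneg (Tc xs)]
    have hzTc : ‖z - Tc xs‖ ≤ 2 * Real.sqrt (δ * C) := by
      have := Real.sqrt_le_sqrt hsq
      rw [Real.sqrt_sq (norm_nonneg _)] at this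
      calc ‖z - Tc xs‖ ≤ Real.sqrt (4 * (δ * C)) := by
            rw [← Real.sqrt_sq (norm_nonneg (z - Tc xs))]
            exact Real.sqrt_le_sqrt hsq
        _ = 2 * Real.sqrt (δ * C) := by
            rw [show (4 : ℝ) = 2 ^ 2 by norm_num, Real.sqrt_mul (by positivity),
              Real.sqrt_sq (by norm_num)]
    have hyTc : ‖y - Tc xs‖ ≤ δ + 2 * Real.sqrt (δ * C) := by
      calc ‖y - Tc xs‖ ≤ ‖y - z‖ + ‖z - Tc xs‖ := norm_sub_le_norm_sub_add_norm_sub y z (Tc xs)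
        _ ≤ δ + 2 * Real.sqrt (δ * C) := by linarith
    calc ‖xs - w‖ ≤ ‖xs - JS m (xs + m • y)‖ + ‖JS m (xs + m • y) - w‖ :=
          norm_sub_le_norm_sub_add_norm_sub _ _ _
      _ ≤ δ + m * ‖y - Tc xs‖ := by
          have hb := h3 0 (Nat.zero_le k)
          have hc := hJS_ne m hm0 (xs + m • y) (xs + m • Tc xs)
          have hd : ‖(xs + m • y) - (xs + m • Tc xs)‖ = m * ‖y - Tc xs‖ := by
            rw [show (xs + m • y) - (xs + m • Tc xs) = m • (y - Tc xs) by
              rw [smul_sub]; abel]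
            rw [norm_smul, Real.norm_eq_abs, abs_of_pos hm0]
          rw [hd] at hc
          exact add_le_add hb hc
      _ ≤ δ + m * (δ + 2 * Real.sqrt (δ * C)) := by
          have := mul_le_mul_of_nonneg_left hyTc hm0.le
          linarith
  -- take limits
  have hδt : Filter.Tendsto (fun k : ℕ => 1 / ((k : ℝ) + 1)) Filter.atTop (nhds 0) :=
    tendsto_one_div_add_atTop_nhds_zero_nat
  have hsqrt : Filter.Tendsto (fun k : ℕ => Real.sqrt ((1 / ((k : ℝ) + 1)) * C))
      Filter.atTop (nhds 0) := by
    have h0 := hδt.mul_const C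
    rw [zero_mul] at h0
    have := (Real.continuous_sqrt.tendsto 0).comp h0
    rw [Real.sqrt_zero] at this; exact this
  have hall : Filter.Tendsto (fun k : ℕ => (1 / ((k : ℝ) + 1)) + m * ((1 / ((k : ℝ) + 1)) +
      2 * Real.sqrt ((1 / ((k : ℝ) + 1)) * C))) Filter.atTop (nhds 0) := by
    have := hδt.add (((hδt.add (hsqrt.const_mul 2)).const_mul m))
    simpa using this
  have hn : ‖xs - w‖ ≤ 0 := ge_of_tendsto' hall key
  have hxw : xs = w := by
    have : ‖xs - w‖ = 0 := le_antisymm hn (norm_nonneg _)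
    rw [norm_eq_zero, sub_eq_zero] at this
    exact this
  have hS : Tc xs ∈ S xs := (hJS_char m hm0 xs (Tc xs)).mp hxw
  exact ⟨⟨hS, hsel⟩, ⟨Tc xs, hsel, hS⟩⟩
end

section
/- Let C ≥ 1 bound both diam(μ_n) and (μ_n), let M ∈ ℕ* with M ≥ ‖T°x*‖ for all x* ∈ X₀, let φ satisfy ∀k,n ∃N ∈ [n; φ(k,n)] (‖x_N − x_{N+1}‖/μ_N < 1/(k+1)) and be monotone in k and n, let θ be a rate of convergence for λ_n → 0, and let ϖ be a modulus of uniform continuity for T w.r.t. H*. Then Φ(k,n) := φ(⌈2C(k+1)⌉ − 1, max{θ(Mϖ(k)+M−1), n}) is a liminf-bound for (x_n) w.r.t. (Γ_k): for all k, n there exists N ∈ [n; Φ(k,n)] with x_N ∈ Γ_k. -/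
lemma one_div_natCast_ceil_pred_add_one_le {a : ℝ} (ha : 0 < a) :
    1 / (((⌈a⌉₊ - 1 : ℕ) : ℝ) + 1) ≤ 1 / a := by
  rw [Nat.cast_pred (Nat.ceil_pos.mpr ha), sub_add_cancel]
  exact one_div_le_one_div_of_le ha (Nat.le_ceil a)

lemma one_div_natCast_mul_add_sub_one_add_one {M w : ℕ} (hM : 1 ≤ M) :
    1 / (((M * w + M - 1 : ℕ) : ℝ) + 1) = 1 / ((w : ℝ) + 1) / M := by
  rw [Nat.cast_sub (hM.trans (Nat.le_add_left M _))]
  push_cast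
  rw [div_div, sub_add_cancel]
  ring

lemma add_mul_div_le_one_div {d m δ C t : ℝ} (hd : 0 ≤ d) (hm : 0 < m) (hmC : m ≤ C)
    (hδ : δ ≤ C) (ht : 0 < t) (h : d / m ≤ 1 / (2 * C * t)) :
    d + δ * (d / m) ≤ 1 / t := by
  have hr : 0 ≤ d / m := div_nonneg hd hm.le
  have hC : 0 < C := hm.trans_le hmC
  calc d + δ * (d / m) = d / m * m + δ * (d / m) := by rw [div_mul_cancel₀ d hm.ne']
    _ ≤ d / m * C + C * (d / m) := by gcongr
    _ = 2 * C * (d / m) := by ring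
    _ ≤ 2 * C * (1 / (2 * C * t)) := by gcongr
    _ = 1 / t := by field_simp

lemma mem_Gamma_of_approx {X : Type*} [NormedAddCommGroup X] [NormedSpace ℝ X]
    {X0 : Set X} {T : X → Set X} {Tc : X → X} {JS : ℝ → X → X} {μ : ℕ → ℝ} {k : ℕ}
    {xs ys w : X} (hxs : xs ∈ X0) (hys : ‖ys‖ ≤ ‖Tc xs‖) (hw : w ∈ T xs)
    (hmin : ‖Tc xs‖ ≤ ‖w‖) (hyw : ‖ys - w‖ ≤ 1 / ((k : ℝ) + 1))
    (hres : ∀ i ≤ k, ‖xs - JS (μ i) (xs + μ i • ys)‖ ≤ 1 / ((k : ℝ) + 1)) :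
    xs ∈ Gamma X0 T Tc JS μ k := by
  refine ⟨hxs, ys, ?_, ⟨w, hw, hyw⟩, hres⟩
  have hwy : ‖w‖ - ‖ys‖ ≤ ‖ys - w‖ := by
    rw [norm_sub_rev]
    exact norm_sub_norm_le w ys
  rw [abs_le]
  constructor <;> linarith

theorem stmt15_general {X : Type*} [NormedAddCommGroup X] [NormedSpace ℝ X]
    (T : X → Set X) (Tc : X → X) (JS JT : ℝ → X → X) (Tl : ℝ → X → X)
    (μ lam : ℕ → ℝ) (hμ : ∀ n, 0 < μ n) (hlam : ∀ n, 0 < lam n)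
    (x : ℕ → X)
    (X0 : Set X) (hx0 : ∀ n, x n ∈ X0)
    (C : ℝ) (hCdiam : ∀ n m, |μ n - μ m| ≤ C) (hCbound : ∀ n, μ n ≤ C)
    (M : ℕ) (hM1 : 1 ≤ M) (hM : ∀ u ∈ X0, ‖Tc u‖ ≤ (M : ℝ))
    (φ : ℕ → ℕ → ℕ)
    (hφ : ∀ k n : ℕ, ∃ N, n ≤ N ∧ N ≤ φ k n ∧
      ‖x N - x (N + 1)‖ / μ N < 1 / ((k : ℝ) + 1))
    (θ : ℕ → ℕ) (hθ : ∀ k n : ℕ, θ k ≤ n → lam n ≤ 1 / ((k : ℝ) + 1))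
    (ϖ : ℕ → ℕ)
    (hϖ : ∀ k : ℕ, ∀ u v : X, ‖u - v‖ ≤ 1 / ((ϖ k : ℝ) + 1) →
      ∀ p ∈ T u, ∃ q ∈ T v, ‖p - q‖ ≤ 1 / ((k : ℝ) + 1))
    (hineq : ∀ n i : ℕ,
      ‖x n - JS (μ i) (x n + μ i • Tl (lam n) (x n))‖ ≤
        ‖x n - x (n + 1)‖ + |μ n - μ i| * (‖x n - x (n + 1)‖ / μ n))
    (hres : ∀ n : ℕ, ‖x n - JT (lam n) (x n)‖ ≤ lam n * ‖Tc (x n)‖)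
    (hyos : ∀ n : ℕ, Tl (lam n) (x n) ∈ T (JT (lam n) (x n)))
    (hTlbound : ∀ n : ℕ, ‖Tl (lam n) (x n)‖ ≤ ‖Tc (x n)‖)
    (hmin : ∀ n : ℕ, ∀ z ∈ T (x n), ‖Tc (x n)‖ ≤ ‖z‖)
    (k n : ℕ) :
    ∃ N, n ≤ N ∧
      N ≤ φ (⌈2 * C * ((k : ℝ) + 1)⌉₊ - 1) (max (θ (M * ϖ k + M - 1)) n) ∧
      x N ∈ Gamma X0 T Tc JS μ k := by
  obtain ⟨N, hN, hNφ, hstep⟩ := hφ (⌈2 * C * ((k : ℝ) + 1)⌉₊ - 1) (max (θ (M * ϖ k + M - 1)) n)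
  refine ⟨N, (le_max_right _ _).trans hN, hNφ, ?_⟩
  have hC : 0 < C := (hμ 0).trans_le (hCbound 0)
  have hstep' : ‖x N - x (N + 1)‖ / μ N ≤ 1 / (2 * C * ((k : ℝ) + 1)) :=
    hstep.le.trans (one_div_natCast_ceil_pred_add_one_le (by positivity))
  have hlamN : lam N ≤ 1 / ((ϖ k : ℝ) + 1) / M := by
    rw [← one_div_natCast_mul_add_sub_one_add_one hM1]
    exact hθ _ _ ((le_max_left _ _).trans hN)
  have hnear : ‖JT (lam N) (x N) - x N‖ ≤ 1 / ((ϖ k : ℝ) + 1) := by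
    rw [norm_sub_rev]
    exact (hres N).trans <| (mul_le_mul_of_nonneg_left (hM _ (hx0 N)) (hlam N).le).trans <|
      (le_div_iff₀ (by exact_mod_cast hM1)).1 hlamN
  obtain ⟨w, hw, hyw⟩ := hϖ k _ _ hnear _ (hyos N)
  exact mem_Gamma_of_approx (hx0 N) (hTlbound N) hw (hmin N w hw) hyw fun i _ =>
    (hineq N i).trans <| add_mul_div_le_one_div (norm_nonneg _) (hμ N) (hCbound N) (hCdiam N i)
      (by positivity) hstep'

/-- liminf-bound: `Φ(k,n) := φ(⌈2C(k+1)⌉ − 1, max{θ(Mϖ(k)+M−1), n})` is a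
liminf-bound for `(x_n)` w.r.t. `(Γ_k)`: for all `k, n` there is `N ∈ [n; Φ(k,n)]` with
`x_N ∈ Γ_k`. -/
theorem stmt15 {X : Type*} [NormedAddCommGroup X] [NormedSpace ℝ X]
    (T S : X → Set X) (Tc : X → X) (JS JT : ℝ → X → X) (Tl : ℝ → X → X)
    (μ lam : ℕ → ℝ) (hμ : ∀ n, 0 < μ n) (hlam : ∀ n, 0 < lam n)
    (x : ℕ → X)
    (hrec : ∀ n, x (n + 1) = JS (μ n) (x n + μ n • Tl (lam n) (x n)))
    (X0 : Set X) (hx0 : ∀ n, x n ∈ X0)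
    (C : ℝ) (hC1 : 1 ≤ C) (hCdiam : ∀ n m, |μ n - μ m| ≤ C) (hCbound : ∀ n, μ n ≤ C)
    (M : ℕ) (hM1 : 1 ≤ M) (hM : ∀ u ∈ X0, ‖Tc u‖ ≤ (M : ℝ))
    (φ : ℕ → ℕ → ℕ)
    (hφ : ∀ k n : ℕ, ∃ N, n ≤ N ∧ N ≤ φ k n ∧
      ‖x N - x (N + 1)‖ / μ N < 1 / ((k : ℝ) + 1))
    (hφmono : ∀ k k' n n' : ℕ, k ≤ k' → n ≤ n' → φ k n ≤ φ k' n')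
    (θ : ℕ → ℕ) (hθ : ∀ k n : ℕ, θ k ≤ n → lam n ≤ 1 / ((k : ℝ) + 1))
    (ϖ : ℕ → ℕ)
    (hϖ : ∀ k : ℕ, ∀ u v : X, ‖u - v‖ ≤ 1 / ((ϖ k : ℝ) + 1) →
      ∀ p ∈ T u, ∃ q ∈ T v, ‖p - q‖ ≤ 1 / ((k : ℝ) + 1))
    (hineq : ∀ n i : ℕ,
      ‖x n - JS (μ i) (x n + μ i • Tl (lam n) (x n))‖ ≤
        ‖x n - x (n + 1)‖ + |μ n - μ i| * (‖x n - x (n + 1)‖ / μ n))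
    (hres : ∀ n : ℕ, ‖x n - JT (lam n) (x n)‖ ≤ lam n * ‖Tc (x n)‖)
    (hyos : ∀ n : ℕ, Tl (lam n) (x n) ∈ T (JT (lam n) (x n)))
    (hTlbound : ∀ n : ℕ, ‖Tl (lam n) (x n)‖ ≤ ‖Tc (x n)‖)
    (hmin : ∀ n : ℕ, ∀ z ∈ T (x n), ‖Tc (x n)‖ ≤ ‖z‖)
    (k n : ℕ) :
    ∃ N, n ≤ N ∧
      N ≤ φ (⌈2 * C * ((k : ℝ) + 1)⌉₊ - 1) (max (θ (M * ϖ k + M - 1)) n) ∧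
      x N ∈ Gamma X0 T Tc JS μ k :=
  stmt15_general T Tc JS JT Tl μ lam hμ hlam x X0 hx0 C hCdiam hCbound M hM1 hM φ hφ θ hθ ϖ hϖ hineq
    hres hyos hTlbound hmin k n
end
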